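/- With the notation of the deformation datum, for the functional w of the datum the infima of ⟨w, ·⟩ on Q and on each Qᵢ (i = 0, 1, …, k) are attained, and ∑_{i=0}^{k} ⌊min_{Qᵢ} ⟨w, ·⟩⌋ = ⌊min_Q ⟨w, ·⟩⌋. -/

import Mathlib

open Set Pointwise

/-- The conical hull of a set `S`: all finite nonnegative linear combinations of
elements of `S`. -/
def coneHull {V : Type*} [AddCommMonoid V] [Module ℝ V] (S : Set V) : Set V :=
  {x | ∃ (m : ℕ) (c : Fin m → ℝ) (v : Fin m → V),
    (∀ i, 0 ≤ c i) ∧ (∀ i, v i ∈ S) ∧ x = ∑ i, c i • v i}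

/-- A vector of `ℝᵐ` is integral if all of its coordinates are integers, i.e. it lies in
the lattice `ℤᵐ`. -/
def IsIntegralVec {m : ℕ} (v : Fin m → ℝ) : Prop := ∀ j, ∃ z : ℤ, v j = (z : ℝ)

/-- A vector of `ℝᵐ` is rational if all of its coordinates are rational, i.e. it lies in
`ℚᵐ`. -/
def IsRationalVec {m : ℕ} (v : Fin m → ℝ) : Prop := ∀ j, ∃ q : ℚ, v j = (q : ℝ)

/-- The standard pairing `⟨u, v⟩ = ∑ j, u j * v j` on `ℝᵐ`. -/
def dot {m : ℕ} (u v : Fin m → ℝ) : ℝ := ∑ j, u j * v j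

/-- A deformation datum for `(ℤⁿ, σ)` (Mavlyutov/Altmann): a Minkowski decomposition
`Q = Q₀ + Q₁ + ⋯ + Q_k` of a polyhedron `Q` inside the full-dimensional strongly convex
rational polyhedral cone `σ ⊆ ℝⁿ`, together with an integral functional `w`, subject to
conditions (i), (ii), (iii), (iv'), (v), (vi). The sets `Q₀, …, Q_k` are indexed by
`Fin (k+1)`, and `Qᵢ = conv(Vᵢ) + coneHull(Rᵢ)` with `Vᵢ` a finite nonempty set of
rational points equal to the set of extreme points of `Qᵢ` and `Rᵢ` a finite set of
rational points. -/
structure DeformationDatum (n k : ℕ) where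
  /-- Finite set of lattice generators of `σ`. -/
  S₀ : Finset (Fin n → ℝ)
  hS₀ : ∀ v ∈ S₀, IsIntegralVec v
  /-- The cone `σ`. -/
  σ : Set (Fin n → ℝ)
  hσ : σ = coneHull (S₀ : Set (Fin n → ℝ))
  /-- `σ` is full-dimensional. -/
  hspan : Submodule.span ℝ σ = ⊤
  /-- `σ` is strongly convex. -/
  hsc : σ ∩ (-σ) = {0}
  /-- The integral functional `w`. -/
  w : Fin n → ℝ
  hw : IsIntegralVec w
  /-- Vertex sets `V₀, …, V_k`. -/
  V : Fin (k + 1) → Finset (Fin n → ℝ)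
  /-- Recession generator sets `R₀, …, R_k`. -/
  R : Fin (k + 1) → Finset (Fin n → ℝ)
  hVne : ∀ i, (V i).Nonempty
  hVQ : ∀ i, ∀ v ∈ V i, IsRationalVec v
  hRQ : ∀ i, ∀ v ∈ R i, IsRationalVec v
  /-- The summands `Q₀, …, Q_k`. -/
  Qi : Fin (k + 1) → Set (Fin n → ℝ)
  hQi : ∀ i, Qi i = convexHull ℝ (V i : Set (Fin n → ℝ)) + coneHull (R i : Set (Fin n → ℝ))
  hVext : ∀ i, (V i : Set (Fin n → ℝ)) = Set.extremePoints ℝ (Qi i)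
  /-- The polyhedron `Q`. -/
  Q : Set (Fin n → ℝ)
  /-- (i) `Q ⊆ σ`. -/
  h1 : Q ⊆ σ
  /-- (ii) `0 ∉ Q`. -/
  h2 : (0 : Fin n → ℝ) ∉ Q
  /-- (iii) `Q = Q₀ + Q₁ + ⋯ + Q_k`. -/
  h3 : Q = ∑ i : Fin (k + 1), Qi i
  /-- (iv') every extreme point of `Q` decomposes as a sum of extreme points of the `Qᵢ`,
  at most one of which is non-integral. -/
  h4' : ∀ v ∈ Set.extremePoints ℝ Q, ∃ vi : Fin (k + 1) → (Fin n → ℝ),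
    (∀ i, vi i ∈ Set.extremePoints ℝ (Qi i)) ∧ v = ∑ i, vi i ∧
    ({i | ¬ IsIntegralVec (vi i)} : Set (Fin (k + 1))).Subsingleton
  /-- (v) the minimum of `⟨w, ·⟩` on `Q` is attained and is `≥ -1`. -/
  h5 : ∃ μ : ℝ, IsLeast ((fun x => dot w x) '' Q) μ ∧ -1 ≤ μ
  /-- (vi) every extreme point of `σ ∩ {⟨w, ·⟩ = -1}` lies in `ℝ⁺ · Q`. -/
  h6 : ∀ v ∈ Set.extremePoints ℝ (σ ∩ {x | dot w x = -1}),
    ∃ lam : ℝ, ∃ q ∈ Q, 0 < lam ∧ v = lam • q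

/-- The generating set of the cone `σ̃ ⊆ ℝⁿ × ℝᵏ`:
`(σ × {0}) ∪ {(q, -e₁-⋯-e_k) : q ∈ Q₀} ∪ {(q, eᵢ) : q ∈ Qᵢ, i = 1, …, k}`. -/
def tildeGens {n k : ℕ} (D : DeformationDatum n k) : Set ((Fin n → ℝ) × (Fin k → ℝ)) :=
  (D.σ ×ˢ ({0} : Set (Fin k → ℝ)))
    ∪ {p | p.1 ∈ D.Qi 0 ∧ p.2 = fun _ => (-1 : ℝ)}
    ∪ ⋃ i : Fin k, {p | p.1 ∈ D.Qi i.succ ∧ p.2 = Pi.single i 1}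

/-- The cone `σ̃ ⊆ ℝⁿ × ℝᵏ` associated to a deformation datum. -/
def tildeSigma {n k : ℕ} (D : DeformationDatum n k) : Set ((Fin n → ℝ) × (Fin k → ℝ)) :=
  coneHull (tildeGens D)

section ConeBasics

variable {V : Type*} [AddCommMonoid V] [Module ℝ V] {S T : Set V} {x y : V}

theorem zero_mem_coneHull (S : Set V) : (0 : V) ∈ coneHull S :=
  ⟨0, Fin.elim0, Fin.elim0, fun i => i.elim0, fun i => i.elim0, by simp⟩

theorem mem_coneHull_of_mem (hx : x ∈ S) : x ∈ coneHull S :=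
  ⟨1, fun _ => 1, fun _ => x, fun _ => zero_le_one, fun _ => hx, by simp⟩

theorem coneHull_mono (hST : S ⊆ T) : coneHull S ⊆ coneHull T := by
  rintro x ⟨m, c, v, hc, hv, rfl⟩
  exact ⟨m, c, v, hc, fun i => hST (hv i), rfl⟩

theorem add_mem_coneHull (hx : x ∈ coneHull S) (hy : y ∈ coneHull S) :
    x + y ∈ coneHull S := by
  obtain ⟨m, c, v, hc, hv, rfl⟩ := hx
  obtain ⟨m', c', v', hc', hv', rfl⟩ := hy
  refine ⟨m + m', Fin.append c c', Fin.append v v', ?_, ?_, ?_⟩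
  · intro i
    refine Fin.addCases (fun j => ?_) (fun j => ?_) i
    · rw [Fin.append_left]; exact hc j
    · rw [Fin.append_right]; exact hc' j
  · intro i
    refine Fin.addCases (fun j => ?_) (fun j => ?_) i
    · rw [Fin.append_left]; exact hv j
    · rw [Fin.append_right]; exact hv' j
  · rw [Fin.sum_univ_add]
    simp [Fin.append_left, Fin.append_right]

theorem smul_mem_coneHull {t : ℝ} (ht : 0 ≤ t) (hx : x ∈ coneHull S) :
    t • x ∈ coneHull S := by
  obtain ⟨m, c, v, hc, hv, rfl⟩ := hx
  refine ⟨m, fun i => t * c i, v, fun i => mul_nonneg ht (hc i), hv, ?_⟩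
  rw [Finset.smul_sum]
  exact Finset.sum_congr rfl fun i _ => by rw [smul_smul]

theorem finsetSum_mem_coneHull {ι : Type*} {t : Finset ι} {g : ι → V}
    (hg : ∀ i ∈ t, g i ∈ coneHull S) : ∑ i ∈ t, g i ∈ coneHull S :=
  Finset.sum_induction g (· ∈ coneHull S) (fun _ _ => add_mem_coneHull)
    (zero_mem_coneHull S) hg

theorem coneHull_subset_zero (hS : S ⊆ {0}) : coneHull S ⊆ {0} := by
  rintro x ⟨m, c, v, hc, hv, rfl⟩
  have : ∀ i, c i • v i = 0 := fun i => by
    have := hS (hv i); simp only [mem_singleton_iff] at this; simp [this]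
  simp [this]

end ConeBasics

section Face

variable {n : ℕ}

/-- `dot w ·` as a continuous linear functional. -/
noncomputable def dotL (w : Fin n → ℝ) : (Fin n → ℝ) →L[ℝ] ℝ :=
  LinearMap.toContinuousLinearMap
    { toFun := fun x => dot w x
      map_add' := fun x y => by
        simp [dot, mul_add, Finset.sum_add_distrib]
      map_smul' := fun c x => by
        simp only [dot, Pi.smul_apply, smul_eq_mul, RingHom.id_apply, Finset.mul_sum]
        exact Finset.sum_congr rfl fun j _ => by ring }

@[simp] theorem dotL_apply (w x : Fin n → ℝ) : dotL w x = dot w x := rfl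

theorem coneHull_nonneg {S : Set (Fin n → ℝ)} (ℓ : (Fin n → ℝ) →L[ℝ] ℝ)
    (hS : ∀ r ∈ S, 0 ≤ ℓ r) {x : Fin n → ℝ} (hx : x ∈ coneHull S) : 0 ≤ ℓ x := by
  obtain ⟨m, c, v, hc, hv, rfl⟩ := hx
  rw [map_sum]
  exact Finset.sum_nonneg fun i _ => by
    rw [map_smul, smul_eq_mul]; exact mul_nonneg (hc i) (hS _ (hv i))

theorem coneHull_zero_of {S : Set (Fin n → ℝ)} (ℓ : (Fin n → ℝ) →L[ℝ] ℝ)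
    (hS : ∀ r ∈ S, ℓ r = 0) {x : Fin n → ℝ} (hx : x ∈ coneHull S) : ℓ x = 0 := by
  obtain ⟨m, c, v, hc, hv, rfl⟩ := hx
  rw [map_sum]
  exact Finset.sum_eq_zero fun i _ => by rw [map_smul, smul_eq_mul, hS _ (hv i), mul_zero]

theorem conv_le {W : Set (Fin n → ℝ)} (ℓ : (Fin n → ℝ) →L[ℝ] ℝ) {m : ℝ}
    (hW : ∀ x ∈ W, m ≤ ℓ x) {x : Fin n → ℝ} (hx : x ∈ convexHull ℝ W) : m ≤ ℓ x :=
  convexHull_min hW (convex_halfSpace_ge ⟨ℓ.map_add, ℓ.map_smul⟩ m) hx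

theorem le_on_convAddCone {W R : Set (Fin n → ℝ)} (ℓ : (Fin n → ℝ) →L[ℝ] ℝ) {m : ℝ}
    (hW : ∀ x ∈ W, m ≤ ℓ x) (hR : ∀ r ∈ R, 0 ≤ ℓ r) {x : Fin n → ℝ}
    (hx : x ∈ convexHull ℝ W + coneHull R) : m ≤ ℓ x := by
  obtain ⟨c, hc, s, hs, rfl⟩ := Set.mem_add.1 hx
  have h1 : m ≤ ℓ c := conv_le ℓ hW hc
  have h2 : 0 ≤ ℓ s := coneHull_nonneg ℓ hR hs
  rw [map_add]; linarith

/-- A convex hull element achieving the minimal value of a linear functional lies in the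
convex hull of the minimizing points. -/
theorem conv_face {W : Set (Fin n → ℝ)} (ℓ : (Fin n → ℝ) →L[ℝ] ℝ) {m : ℝ}
    (hW : ∀ x ∈ W, m ≤ ℓ x) {c : Fin n → ℝ} (hc : c ∈ convexHull ℝ W) (hm : ℓ c = m) :
    c ∈ convexHull ℝ {x ∈ W | ℓ x = m} := by
  classical
  rw [convexHull_eq] at hc
  obtain ⟨ι, t, wt, z, h0, h1, hz, hx⟩ := hc
  rw [Finset.centerMass_eq_of_sum_1 _ _ h1] at hx
  have hval : ∑ i ∈ t, wt i * (ℓ (z i) - m) = 0 := by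
    have hlc : ℓ c = ∑ i ∈ t, wt i * ℓ (z i) := by
      rw [← hx, map_sum]
      exact Finset.sum_congr rfl fun i _ => by rw [map_smul, smul_eq_mul]
    have : ∑ i ∈ t, wt i * (ℓ (z i) - m) = (∑ i ∈ t, wt i * ℓ (z i)) - (∑ i ∈ t, wt i) * m := by
      rw [Finset.sum_mul, ← Finset.sum_sub_distrib]
      exact Finset.sum_congr rfl fun i _ => by ring
    rw [this, ← hlc, h1, hm]; ring
  have hzero : ∀ i ∈ t, wt i * (ℓ (z i) - m) = 0 := by
    rw [← Finset.sum_eq_zero_iff_of_nonneg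
      (fun i hi => mul_nonneg (h0 i hi) (by linarith [hW (z i) (hz i hi)]))]
    exact hval
  set t' := t.filter (fun i => wt i ≠ 0) with ht'
  have hsum1 : ∑ i ∈ t', wt i = 1 := by
    rw [ht', Finset.sum_filter_of_ne (fun i _ h => h), h1]
  have hcsum : ∑ i ∈ t', wt i • z i = c := by
    rw [ht', Finset.sum_filter_of_ne, hx]
    intro i _ h hw; exact h (by rw [hw, zero_smul])
  have hmem : ∀ i ∈ t', z i ∈ {x ∈ W | ℓ x = m} := by
    intro i hi
    obtain ⟨hit, hwne⟩ := Finset.mem_filter.1 hi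
    refine ⟨hz i hit, ?_⟩
    rcases mul_eq_zero.1 (hzero i hit) with h | h
    · exact absurd h hwne
    · linarith
  have hmem2 := Finset.centerMass_mem_convexHull (R := ℝ) t'
    (fun i hi => h0 i (Finset.mem_filter.1 hi).1) (by rw [hsum1]; norm_num) hmem
  rwa [Finset.centerMass_eq_of_sum_1 _ _ hsum1, hcsum] at hmem2

theorem cone_face {R : Set (Fin n → ℝ)} (ℓ : (Fin n → ℝ) →L[ℝ] ℝ)
    (hR : ∀ r ∈ R, 0 ≤ ℓ r) {s : Fin n → ℝ} (hs : s ∈ coneHull R) (hm : ℓ s = 0) :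
    s ∈ coneHull {r ∈ R | ℓ r = 0} := by
  classical
  obtain ⟨m₀, cc, v, hcc, hv, rfl⟩ := hs
  have hterm : ∀ i, cc i * ℓ (v i) = 0 := by
    have hsum : ∑ i, cc i * ℓ (v i) = 0 := by
      rw [← hm, map_sum]
      exact Finset.sum_congr rfl fun i _ => by rw [map_smul, smul_eq_mul]
    intro i
    exact (Finset.sum_eq_zero_iff_of_nonneg
      (fun i _ => mul_nonneg (hcc i) (hR _ (hv i)))).1 hsum i (Finset.mem_univ i)
  have : ∑ i, cc i • v i = ∑ i ∈ Finset.univ.filter (fun i => ℓ (v i) = 0), cc i • v i := by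
    rw [Finset.sum_filter_of_ne]
    intro i _ h
    by_contra hne
    have hc0 : cc i = 0 := by
      rcases mul_eq_zero.1 (hterm i) with h' | h'
      · exact h'
      · exact absurd h' hne
    exact h (by rw [hc0, zero_smul])
  rw [this]
  exact finsetSum_mem_coneHull fun i hi =>
    smul_mem_coneHull (hcc i)
      (mem_coneHull_of_mem ⟨hv i, (Finset.mem_filter.1 hi).2⟩)

/-- The face of `conv W + cone R` where a linear functional attains its minimum. -/
theorem face_decomp {W R : Set (Fin n → ℝ)} (ℓ : (Fin n → ℝ) →L[ℝ] ℝ) {m : ℝ}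
    (hW : ∀ x ∈ W, m ≤ ℓ x) (hR : ∀ r ∈ R, 0 ≤ ℓ r) :
    (convexHull ℝ W + coneHull R) ∩ {x | ℓ x = m} =
      convexHull ℝ {x ∈ W | ℓ x = m} + coneHull {r ∈ R | ℓ r = 0} := by
  apply Set.Subset.antisymm
  · rintro x ⟨hx, hxm⟩
    obtain ⟨c, hc, s, hs, rfl⟩ := Set.mem_add.1 hx
    have h1 : m ≤ ℓ c := conv_le ℓ hW hc
    have h2 : 0 ≤ ℓ s := coneHull_nonneg ℓ hR hs
    have hcs : ℓ c + ℓ s = m := by rw [← map_add]; exact hxm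
    have hcm : ℓ c = m := by linarith
    have hs0 : ℓ s = 0 := by linarith
    exact Set.add_mem_add (conv_face ℓ hW hc hcm) (cone_face ℓ hR hs hs0)
  · rintro x hx
    obtain ⟨c, hc, s, hs, rfl⟩ := Set.mem_add.1 hx
    refine ⟨Set.add_mem_add (convexHull_mono (sep_subset _ _) hc)
      (coneHull_mono (sep_subset _ _) hs), ?_⟩
    have hcm : ℓ c = m :=
      convexHull_min (fun y hy => hy.2) (convex_hyperplane ⟨ℓ.map_add, ℓ.map_smul⟩ m) hc
    have hs0 : ℓ s = 0 := coneHull_zero_of ℓ (fun r hr => hr.2) hs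
    show ℓ (c + s) = m
    rw [map_add, hcm, hs0, add_zero]

end Face

section Decomp

variable {n : ℕ}

theorem convexHull_finsetSum {ι : Type*} (t : Finset ι) (S : ι → Set (Fin n → ℝ)) :
    convexHull ℝ (∑ i ∈ t, S i) = ∑ i ∈ t, convexHull ℝ (S i) := by
  classical
  induction t using Finset.induction_on with
  | empty =>
    simp only [Finset.sum_empty]
    have : (0 : Set (Fin n → ℝ)) = {(0 : Fin n → ℝ)} := rfl
    rw [this, convexHull_singleton]
  | insert _ _ h ih =>
    rw [Finset.sum_insert h, Finset.sum_insert h, convexHull_add, ih]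

theorem finsetSum_sets_finite {ι : Type*} (t : Finset ι) (S : ι → Set (Fin n → ℝ))
    (h : ∀ i, (S i).Finite) : (∑ i ∈ t, S i).Finite := by
  classical
  induction t using Finset.induction_on with
  | empty =>
    simp only [Finset.sum_empty]
    exact Set.finite_singleton 0
  | insert _ _ hnot ih =>
    rw [Finset.sum_insert hnot]
    exact Set.Finite.add (h _) ih

theorem sum_coneHull_eq {k : ℕ} (S : Fin (k + 1) → Set (Fin n → ℝ)) :
    ∑ i, coneHull (S i) = coneHull (⋃ i, S i) := by
  classical
  apply Set.Subset.antisymm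
  · intro x hx
    obtain ⟨g, hg, rfl⟩ := Set.mem_fintype_sum _ x |>.1 hx
    exact finsetSum_mem_coneHull fun i _ =>
      coneHull_mono (Set.subset_iUnion S i) (hg i)
  · rintro x ⟨m, c, v, hc, hv, rfl⟩
    have hidx : ∀ j, ∃ i, v j ∈ S i := fun j => Set.mem_iUnion.1 (hv j)
    choose idx hidxm using hidx
    have hfib : ∑ j, c j • v j
        = ∑ i, ∑ j ∈ Finset.univ.filter (fun j => idx j = i), c j • v j := by
      rw [Finset.sum_fiberwise]
    rw [hfib]
    refine Set.finset_sum_mem_finset_sum _ _ _ fun i _ => ?_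
    refine finsetSum_mem_coneHull fun j hj => ?_
    have hji : idx j = i := (Finset.mem_filter.1 hj).2
    exact smul_mem_coneHull (hc j) (mem_coneHull_of_mem (hji ▸ hidxm j))

end Decomp

section Gordan

variable {n : ℕ}

theorem gordan (N : Set (Fin n → ℝ)) (hfin : N.Finite) :
    (∃ u : (Fin n → ℝ) →L[ℝ] ℝ, ∀ s ∈ N, s ≠ 0 → 0 < u s) ∨
    (∃ r₀ ∈ N, r₀ ≠ (0 : Fin n → ℝ) ∧ -r₀ ∈ coneHull N) := by
  classical
  set N' := N \ {0} with hN'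
  by_cases h0 : (0 : Fin n → ℝ) ∈ convexHull ℝ N'
  · right
    rw [convexHull_eq] at h0
    obtain ⟨ι, t, wt, z, hw0, hw1, hz, hx⟩ := h0
    rw [Finset.centerMass_eq_of_sum_1 _ _ hw1] at hx
    have hex : ∃ j ∈ t, 0 < wt j := by
      by_contra hcon
      push_neg at hcon
      have : ∑ i ∈ t, wt i = 0 :=
        Finset.sum_eq_zero fun i hi => le_antisymm (hcon i hi) (hw0 i hi)
      rw [hw1] at this; norm_num at this
    obtain ⟨j, hjt, hjpos⟩ := hex
    have hzj : z j ∈ N' := hz j hjt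
    refine ⟨z j, hzj.1, by simpa using hzj.2, ?_⟩
    have hsum : ∑ i ∈ t.erase j, wt i • z i = wt j • (-z j) := by
      rw [smul_neg]
      exact eq_neg_of_add_eq_zero_right
        ((Finset.add_sum_erase t (fun i => wt i • z i) hjt).trans hx)
    have hneg : -z j = (wt j)⁻¹ • ∑ i ∈ t.erase j, wt i • z i := by
      rw [hsum, smul_smul, inv_mul_cancel₀ (ne_of_gt hjpos), one_smul]
    rw [hneg]
    refine smul_mem_coneHull (by positivity) (finsetSum_mem_coneHull fun i hi => ?_)
    exact smul_mem_coneHull (hw0 i (Finset.mem_of_mem_erase hi))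
      (mem_coneHull_of_mem (hz i (Finset.mem_of_mem_erase hi)).1)
  · left
    have hclosed : IsClosed (convexHull ℝ N') :=
      ((hfin.diff (t := {0})).isCompact_convexHull (𝕜 := ℝ)).isClosed
    obtain ⟨f, u₀, hf0, hfb⟩ :=
      geometric_hahn_banach_point_closed (convex_convexHull ℝ N') hclosed h0
    refine ⟨f, fun s hs hsne => ?_⟩
    have hmem : s ∈ convexHull ℝ N' :=
      subset_convexHull ℝ _ ⟨hs, by simpa using hsne⟩
    have h1 := hfb s hmem
    have h2 : f 0 = 0 := map_zero f
    linarith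

theorem ray_mem_coneHull (S : Finset (Fin n → ℝ)) (u : (Fin n → ℝ) →L[ℝ] ℝ)
    (hu : ∀ s ∈ S, s ≠ (0 : Fin n → ℝ) → 0 < u s) {q r : Fin n → ℝ}
    (hq : ∀ t : ℝ, 0 ≤ t → q + t • r ∈ coneHull (S : Set (Fin n → ℝ))) :
    r ∈ coneHull (S : Set (Fin n → ℝ)) := by
  classical
  set T := S.filter (fun s => s ≠ 0) with hT
  obtain ⟨δ, hδpos, hδle⟩ : ∃ δ : ℝ, 0 < δ ∧ ∀ s ∈ T, δ ≤ u s := by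
    rcases T.eq_empty_or_nonempty with h | h
    · exact ⟨1, one_pos, by simp [h]⟩
    · obtain ⟨s₀, hs₀, hmin⟩ := T.exists_min_image u h
      have hh := Finset.mem_filter.1 hs₀
      exact ⟨u s₀, hu _ hh.1 hh.2, hmin⟩
  have husnn : ∀ s ∈ (S : Set (Fin n → ℝ)), 0 ≤ u s := by
    intro s hs
    by_cases h : s = 0
    · simp [h]
    · exact (hu s hs h).le
  have husnn' : ∀ s ∈ T, (0:ℝ) ≤ u s := fun s hs =>
    husnn s (Finset.mem_coe.2 (Finset.mem_filter.1 hs).1)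
  -- collapse a conic combination to one coefficient per nonzero generator
  have collapse : ∀ x ∈ coneHull (S : Set (Fin n → ℝ)),
      ∃ c : (Fin n → ℝ) → ℝ, (∀ s, 0 ≤ c s) ∧ x = ∑ s ∈ T, c s • s := by
    rintro x ⟨m, cc, v, hcc, hv, rfl⟩
    refine ⟨fun s => ∑ j ∈ Finset.univ.filter (fun j => v j = s), cc j,
      fun s => Finset.sum_nonneg fun j _ => hcc j, ?_⟩
    have h1 : ∑ j, cc j • v j
        = ∑ s ∈ S, ∑ j ∈ Finset.univ.filter (fun j => v j = s), cc j • v j :=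
      (Finset.sum_fiberwise_of_maps_to (fun j _ => Finset.mem_coe.1 (hv j)) _).symm
    have h2 : ∀ s ∈ S, ∑ j ∈ Finset.univ.filter (fun j => v j = s), cc j • v j
        = (∑ j ∈ Finset.univ.filter (fun j => v j = s), cc j) • s := by
      intro s _
      rw [Finset.sum_smul]
      exact Finset.sum_congr rfl fun j hj => by rw [(Finset.mem_filter.1 hj).2]
    have h3 : ∑ s ∈ S, (∑ j ∈ Finset.univ.filter (fun j => v j = s), cc j) • s
        = ∑ s ∈ T, (∑ j ∈ Finset.univ.filter (fun j => v j = s), cc j) • s := by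
      rw [hT, Finset.sum_filter_of_ne]
      intro s _ hne
      by_contra hs0
      exact hne (by rw [hs0, smul_zero])
    rw [h1, Finset.sum_congr rfl h2, h3]
  set B := (u q + |u r|) / δ with hB
  set ψ : ({s // s ∈ T} → ℝ) → (Fin n → ℝ) :=
    fun c => ∑ s : {s // s ∈ T}, c s • (s : Fin n → ℝ) with hψ
  have hψcont : Continuous ψ :=
    continuous_finset_sum _ fun s _ => (continuous_apply s).smul continuous_const
  set Box : Set ({s // s ∈ T} → ℝ) := Set.pi Set.univ fun _ => Set.Icc (0:ℝ) B with hBox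
  have hBoxc : IsCompact Box := isCompact_univ_pi fun _ => isCompact_Icc
  have hK : IsCompact (ψ '' Box) := hBoxc.image hψcont
  have hKsub : ψ '' Box ⊆ coneHull (S : Set (Fin n → ℝ)) := by
    rintro _ ⟨c, hc, rfl⟩
    refine finsetSum_mem_coneHull fun s _ => smul_mem_coneHull ?_ (mem_coneHull_of_mem ?_)
    · exact (hc s (Set.mem_univ s)).1
    · exact Finset.mem_coe.2 (Finset.mem_filter.1 s.2).1
  have hq0 : 0 ≤ u q := coneHull_nonneg u husnn (by simpa using hq 0 le_rfl)
  have hmemK : ∀ j : ℕ, (1/((j:ℝ)+1)) • q + r ∈ ψ '' Box := by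
    intro j
    have htpos : (0:ℝ) < (j:ℝ)+1 := by positivity
    have hx : (1/((j:ℝ)+1)) • (q + ((j:ℝ)+1) • r) ∈ coneHull (S : Set (Fin n → ℝ)) :=
      smul_mem_coneHull (by positivity) (hq _ (by positivity))
    have hxeq : (1/((j:ℝ)+1)) • (q + ((j:ℝ)+1) • r) = (1/((j:ℝ)+1)) • q + r := by
      rw [smul_add, smul_smul]
      congr 1
      rw [one_div, inv_mul_cancel₀ (ne_of_gt htpos), one_smul]
    rw [hxeq] at hx
    have hub : u ((1/((j:ℝ)+1)) • q + r) ≤ u q + |u r| := by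
      rw [map_add, map_smul, smul_eq_mul]
      have hle1 : (1/((j:ℝ)+1)) ≤ 1 := by
        rw [div_le_one htpos]; linarith
      have h01 : (0:ℝ) ≤ 1/((j:ℝ)+1) := by positivity
      nlinarith [le_abs_self (u r)]
    obtain ⟨c, hcnn, hceq⟩ := collapse _ hx
    have hux : u ((1/((j:ℝ)+1)) • q + r) = ∑ s ∈ T, c s * u s := by
      rw [hceq, map_sum]
      exact Finset.sum_congr rfl fun s _ => by rw [map_smul, smul_eq_mul]
    have hboundc : ∀ s ∈ T, c s ≤ B := by
      intro s hs
      have hterm : δ * c s ≤ c s * u s := by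
        have := hδle s hs; nlinarith [hcnn s]
      have hsum_ge : c s * u s ≤ ∑ s' ∈ T, c s' * u s' :=
        Finset.single_le_sum (fun s' hs' => mul_nonneg (hcnn s') (husnn' s' hs')) hs
      rw [hB, le_div_iff₀ hδpos]
      nlinarith [hub, hux]
    refine ⟨fun s => c s, fun s _ => ⟨hcnn s, hboundc s s.2⟩, ?_⟩
    rw [hψ, hceq]
    simp only
    rw [Finset.univ_eq_attach, Finset.sum_attach T (fun s => c s • s)]
  have htend : Filter.Tendsto (fun j : ℕ => (1/((j:ℝ)+1)) • q + r)
      Filter.atTop (nhds r) := by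
    have h1 : Filter.Tendsto (fun j : ℕ => 1/((j:ℝ)+1)) Filter.atTop (nhds 0) :=
      tendsto_one_div_add_atTop_nhds_zero_nat
    have h2 := h1.smul_const q
    rw [zero_smul] at h2
    have h3 := h2.add (tendsto_const_nhds (x := r))
    rwa [zero_add] at h3
  exact hKsub (hK.isClosed.mem_of_tendsto htend (Filter.Eventually.of_forall hmemK))

end Gordan


/-- For the functional `w` of the deformation datum, the minima of `⟨w, ·⟩` on `Q` and on
each `Qᵢ` are attained, and `∑ᵢ ⌊min_{Qᵢ} ⟨w, ·⟩⌋ = ⌊min_Q ⟨w, ·⟩⌋`. -/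
theorem sum_floor_min_w_eq_floor_min_w (n k : ℕ) (hk : 1 ≤ k)
    (D : DeformationDatum n k) :
    ∃ (μ : ℝ) (μi : Fin (k + 1) → ℝ),
      IsLeast ((fun x => dot D.w x) '' D.Q) μ ∧
      (∀ i, IsLeast ((fun x => dot D.w x) '' D.Qi i) (μi i)) ∧
      ∑ i, ⌊μi i⌋ = ⌊μ⌋ := by
  classical
  obtain ⟨μ₅, hμ₅, -⟩ := D.h5
  -- dot as a linear functional
  have dadd : ∀ x y, dot D.w (x + y) = dot D.w x + dot D.w y :=
    fun x y => map_add (dotL D.w) x y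
  have dsmul : ∀ (t : ℝ) x, dot D.w (t • x) = t * dot D.w x :=
    fun t x => map_smul (dotL D.w) t x
  have dsum : ∀ {ι : Type} (s : Finset ι) (g : ι → Fin n → ℝ),
      dot D.w (∑ i ∈ s, g i) = ∑ i ∈ s, dot D.w (g i) :=
    fun s g => map_sum (dotL D.w) g s
  -- minimizing vertices
  have hmin : ∀ i : Fin (k+1), ∃ v ∈ D.V i, ∀ v' ∈ D.V i, dot D.w v ≤ dot D.w v' :=
    fun i => (D.V i).exists_min_image (fun x => dot D.w x) (D.hVne i)
  choose vm hvmV hvmmin using hmin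
  set μi : Fin (k+1) → ℝ := fun i => dot D.w (vm i) with hμidef
  have hQi_mem : ∀ i, ∀ v ∈ D.V i, v ∈ D.Qi i := by
    intro i v hv
    rw [D.hQi i]
    have := Set.add_mem_add (subset_convexHull ℝ (D.V i : Set (Fin n → ℝ)) hv)
      (zero_mem_coneHull (D.R i : Set (Fin n → ℝ)))
    simpa using this
  set qstar := ∑ i, vm i with hqstar
  have hQmem : ∀ (g : Fin (k+1) → (Fin n → ℝ)), (∀ i, g i ∈ D.Qi i) → ∑ i, g i ∈ D.Q := by
    intro g hg
    rw [D.h3]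
    exact Set.finset_sum_mem_finset_sum _ _ _ fun i _ => hg i
  have hqstarQ : qstar ∈ D.Q := hQmem _ fun i => hQi_mem i _ (hvmV i)
  set Rset : Set (Fin n → ℝ) := ⋃ i, (D.R i : Set (Fin n → ℝ)) with hRset
  have hRsetfin : Rset.Finite := Set.finite_iUnion fun i => (D.R i).finite_toSet
  -- recession
  have hQi_rec : ∀ i, ∀ x ∈ D.Qi i, ∀ s ∈ coneHull (D.R i : Set (Fin n → ℝ)),
      x + s ∈ D.Qi i := by
    intro i x hx s hs
    rw [D.hQi i] at hx ⊢
    obtain ⟨c, hc, t, ht, rfl⟩ := Set.mem_add.1 hx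
    have := Set.add_mem_add hc (add_mem_coneHull ht hs)
    rwa [← add_assoc] at this
  have hrec : ∀ x ∈ D.Q, ∀ s ∈ coneHull Rset, x + s ∈ D.Q := by
    intro x hx s hs
    rw [D.h3] at hx
    obtain ⟨g, hg, rfl⟩ := (Set.mem_fintype_sum _ _).1 hx
    rw [hRset, ← sum_coneHull_eq] at hs
    obtain ⟨g', hg', rfl⟩ := (Set.mem_fintype_sum _ _).1 hs
    rw [← Finset.sum_add_distrib]
    exact hQmem _ fun i => hQi_rec i _ (hg i) _ (hg' i)
  -- nonnegativity of dot w on recession generators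
  have hdotqstarlb : μ₅ ≤ dot D.w qstar := hμ₅.2 (Set.mem_image_of_mem _ hqstarQ)
  have hRnn : ∀ r ∈ Rset, 0 ≤ dot D.w r := by
    intro r hr
    by_contra hneg
    push_neg at hneg
    set t := (dot D.w qstar - μ₅ + 1) / (-(dot D.w r)) with htdef
    have htpos : 0 ≤ t := div_nonneg (by linarith) (by linarith)
    have hmem : qstar + t • r ∈ D.Q :=
      hrec _ hqstarQ _ (smul_mem_coneHull htpos (mem_coneHull_of_mem hr))
    have hge := hμ₅.2 (Set.mem_image_of_mem _ hmem)
    rw [dadd, dsmul] at hge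
    have hdne : -dot D.w r ≠ 0 := ne_of_gt (by linarith)
    have ht : t * dot D.w r = -(dot D.w qstar - μ₅ + 1) := by
      have hcalc : t * -dot D.w r = dot D.w qstar - μ₅ + 1 := by
        rw [htdef, div_mul_cancel₀ _ hdne]
      nlinarith [hcalc]
    rw [ht] at hge
    linarith
  -- minima on the Qi
  have hQiLeast : ∀ i, IsLeast ((fun x => dot D.w x) '' D.Qi i) (μi i) := by
    intro i
    constructor
    · exact ⟨vm i, hQi_mem i _ (hvmV i), rfl⟩
    · rintro y ⟨x, hx, rfl⟩
      rw [D.hQi i] at hx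
      exact le_on_convAddCone (dotL D.w)
        (fun v hv => hvmmin i v hv)
        (fun r hr => hRnn r (Set.mem_iUnion.2 ⟨i, hr⟩)) hx
  set μ := ∑ i, μi i with hμdef
  have hdotqstar : dot D.w qstar = μ := by rw [hqstar, dsum]
  have hQLeast : IsLeast ((fun x => dot D.w x) '' D.Q) μ := by
    constructor
    · exact ⟨qstar, hqstarQ, hdotqstar⟩
    · rintro y ⟨x, hx, rfl⟩
      rw [D.h3] at hx
      obtain ⟨g, hg, rfl⟩ := (Set.mem_fintype_sum _ _).1 hx
      simp only
      rw [dsum]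
      exact Finset.sum_le_sum fun i _ => (hQiLeast i).2 ⟨g i, hg i, rfl⟩
  -- decomposition of Q
  set Wset : Set (Fin n → ℝ) := ∑ i, ((D.V i : Set (Fin n → ℝ))) with hWset
  have hWfin : Wset.Finite := finsetSum_sets_finite _ _ fun i => (D.V i).finite_toSet
  have hQdec : D.Q = convexHull ℝ Wset + coneHull Rset := by
    rw [D.h3, Finset.sum_congr rfl (fun i (_ : i ∈ Finset.univ) => D.hQi i),
      Finset.sum_add_distrib, hWset, convexHull_finsetSum, hRset, ← sum_coneHull_eq]
  have hWlb : ∀ x ∈ Wset, μ ≤ dotL D.w x := by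
    intro x hx
    obtain ⟨g, hg, rfl⟩ := (Set.mem_fintype_sum _ _).1 hx
    rw [dotL_apply, dsum]
    exact Finset.sum_le_sum fun i _ => hvmmin i _ (hg i)
  have hRnn' : ∀ r ∈ Rset, 0 ≤ dotL D.w r := hRnn
  have hqstarW : qstar ∈ Wset :=
    Set.finset_sum_mem_finset_sum _ _ _ fun i _ => Finset.mem_coe.2 (hvmV i)
  set W' : Set (Fin n → ℝ) := {x ∈ Wset | dotL D.w x = μ} with hW'
  set R0 : Set (Fin n → ℝ) := {r ∈ Rset | dotL D.w r = 0} with hR0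
  have hFdec : D.Q ∩ {x | dotL D.w x = μ} = convexHull ℝ W' + coneHull R0 := by
    rw [hQdec]
    exact face_decomp (dotL D.w) hWlb hRnn'
  -- positive functional on the generators of σ
  obtain ⟨u₂, hu₂⟩ : ∃ u₂ : (Fin n → ℝ) →L[ℝ] ℝ,
      ∀ s ∈ (D.S₀ : Set (Fin n → ℝ)), s ≠ 0 → 0 < u₂ s := by
    rcases gordan (D.S₀ : Set (Fin n → ℝ)) D.S₀.finite_toSet with h | ⟨r₀, hr₀S, hr₀ne, hr₀neg⟩
    · exact h
    · exfalso
      have h1 : r₀ ∈ D.σ := by rw [D.hσ]; exact mem_coneHull_of_mem hr₀S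
      have h2 : r₀ ∈ -D.σ := by rw [Set.mem_neg, D.hσ]; exact hr₀neg
      have h3 : r₀ ∈ D.σ ∩ -D.σ := ⟨h1, h2⟩
      rw [D.hsc] at h3
      exact hr₀ne (by simpa using h3)
  have hR0fin : R0.Finite := hRsetfin.subset (sep_subset _ _)
  -- positive functional on R0
  obtain ⟨u, hu⟩ : ∃ u : (Fin n → ℝ) →L[ℝ] ℝ, ∀ s ∈ R0, s ≠ 0 → 0 < u s := by
    rcases gordan R0 hR0fin with h | ⟨r₀, hr₀, hr₀ne, hr₀neg⟩
    · exact h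
    · exfalso
      have hray : ∀ r : Fin n → ℝ, r ∈ coneHull R0 →
          ∀ t : ℝ, 0 ≤ t → qstar + t • r ∈ coneHull (D.S₀ : Set (Fin n → ℝ)) := by
        intro r hr t ht
        have hmem : qstar + t • r ∈ D.Q := hrec _ hqstarQ _
          (coneHull_mono (sep_subset _ _) (smul_mem_coneHull ht hr))
        have := D.h1 hmem
        rwa [D.hσ] at this
      have h1 : r₀ ∈ coneHull (D.S₀ : Set (Fin n → ℝ)) :=
        ray_mem_coneHull D.S₀ u₂ hu₂ (hray r₀ (mem_coneHull_of_mem hr₀))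
      have h2 : -r₀ ∈ coneHull (D.S₀ : Set (Fin n → ℝ)) :=
        ray_mem_coneHull D.S₀ u₂ hu₂ (hray _ hr₀neg)
      have h3 : r₀ ∈ D.σ ∩ -D.σ := ⟨by rw [D.hσ]; exact h1, by rw [Set.mem_neg, D.hσ]; exact h2⟩
      rw [D.hsc] at h3
      exact hr₀ne (by simpa using h3)
  -- second face
  have hW'fin : W'.Finite := hWfin.subset (sep_subset _ _)
  have hqstarW' : qstar ∈ W' := ⟨hqstarW, hdotqstar⟩
  obtain ⟨v₀, hv₀W', hv₀min⟩ :=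
    Set.exists_min_image W' (fun x => u x) hW'fin ⟨qstar, hqstarW'⟩
  set m' := u v₀ with hm'
  have hR0nn : ∀ r ∈ R0, 0 ≤ u r := by
    intro r hr
    by_cases h : r = 0
    · simp [h]
    · exact (hu r hr h).le
  have hF2 := face_decomp u (fun y hy => hv₀min y hy) hR0nn
  have hcone0 : coneHull {r ∈ R0 | u r = 0} = {(0 : Fin n → ℝ)} := by
    apply subset_antisymm
    · apply coneHull_subset_zero
      rintro r ⟨hr, hur⟩
      by_contra hne
      exact absurd hur (ne_of_gt (hu r hr fun h => hne (by simp [h])))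
    · intro x hx
      rw [Set.mem_singleton_iff] at hx
      rw [hx]
      exact zero_mem_coneHull _
  set W'' : Set (Fin n → ℝ) := {x ∈ W' | u x = m'} with hW''
  have hFu : (convexHull ℝ W' + coneHull R0) ∩ {x | u x = m'} = convexHull ℝ W'' := by
    rw [hF2, hcone0]
    have hz : ({(0 : Fin n → ℝ)} : Set (Fin n → ℝ)) = 0 := rfl
    rw [hz, add_zero]
  have hW''fin : W''.Finite := hW'fin.subset (sep_subset _ _)
  have hv₀W'' : v₀ ∈ W'' := ⟨hv₀W', rfl⟩
  obtain ⟨v, hvext⟩ := (hW''fin.isCompact_convexHull (𝕜 := ℝ)).extremePoints_nonempty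
    ⟨v₀, subset_convexHull ℝ _ hv₀W''⟩
  -- exposure chain
  have hv₀F : v₀ ∈ D.Q ∩ {x | dotL D.w x = μ} := by
    rw [hFdec]
    have := Set.add_mem_add (subset_convexHull ℝ W' hv₀W') (zero_mem_coneHull R0)
    simpa using this
  have hFuEq : (D.Q ∩ {x | dotL D.w x = μ}) ∩ {x | u x = m'} = convexHull ℝ W'' := by
    rw [hFdec, hFu]
  have hexpQF : IsExposed ℝ D.Q (D.Q ∩ {x | dotL D.w x = μ}) := by
    intro _
    refine ⟨-(dotL D.w), ?_⟩
    ext x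
    simp only [Set.mem_inter_iff, Set.mem_setOf_eq, ContinuousLinearMap.neg_apply,
      neg_le_neg_iff, Set.mem_sep_iff]
    constructor
    · rintro ⟨hxQ, hxμ⟩
      exact ⟨hxQ, fun y hy => by
        have := hQLeast.2 (Set.mem_image_of_mem _ hy)
        rw [hxμ]; exact this⟩
    · rintro ⟨hxQ, hmax⟩
      refine ⟨hxQ, ?_⟩
      have h1 := hQLeast.2 (Set.mem_image_of_mem _ hxQ)
      have h2 := hmax qstar hqstarQ
      have h3 : dotL D.w qstar = μ := hdotqstar
      have : dotL D.w x ≤ μ := by rw [← h3]; exact h2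
      exact le_antisymm this h1
  have hFulb : ∀ x ∈ D.Q ∩ {x | dotL D.w x = μ}, m' ≤ u x := by
    intro x hx
    rw [hFdec] at hx
    exact le_on_convAddCone u (fun y hy => hv₀min y hy) hR0nn hx
  have hexpFFu : IsExposed ℝ (D.Q ∩ {x | dotL D.w x = μ})
      ((D.Q ∩ {x | dotL D.w x = μ}) ∩ {x | u x = m'}) := by
    intro _
    refine ⟨-u, ?_⟩
    ext x
    simp only [Set.mem_inter_iff, Set.mem_setOf_eq, ContinuousLinearMap.neg_apply,
      neg_le_neg_iff, Set.mem_sep_iff]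
    constructor
    · rintro ⟨hxF, hxm⟩
      exact ⟨hxF, fun y hy => by rw [hxm]; exact hFulb y hy⟩
    · rintro ⟨hxF, hmax⟩
      exact ⟨hxF, le_antisymm (hmax v₀ hv₀F) (hFulb x hxF)⟩
  have hvQext : v ∈ Set.extremePoints ℝ D.Q := by
    have h1 : IsExtreme ℝ D.Q ((D.Q ∩ {x | dotL D.w x = μ}) ∩ {x | u x = m'}) :=
      hexpQF.isExtreme.trans hexpFFu.isExtreme
    apply h1.extremePoints_subset_extremePoints
    rwa [hFuEq]
  have hvF : v ∈ D.Q ∩ {x | dotL D.w x = μ} := by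
    have hvFu : v ∈ (D.Q ∩ {x | dotL D.w x = μ}) ∩ {x | u x = m'} := by
      rw [hFuEq]
      exact hvext.1
    exact hvFu.1
  have hdotv : dot D.w v = μ := hvF.2
  -- conclusion via h4'
  obtain ⟨vi, hviext, hvsum, hvsub⟩ := D.h4' v hvQext
  have hviV : ∀ i, vi i ∈ D.V i := by
    intro i
    have h := hviext i
    rw [← D.hVext i] at h
    exact h
  have hge : ∀ i, μi i ≤ dot D.w (vi i) := fun i => hvmmin i _ (hviV i)
  have hsumeq : ∑ i, dot D.w (vi i) = ∑ i, μi i := by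
    rw [← dsum, ← hvsum, hdotv, hμdef]
  have heq : ∀ i, dot D.w (vi i) = μi i := by
    intro i
    by_contra hne
    have hlt : μi i < dot D.w (vi i) := lt_of_le_of_ne (hge i) (Ne.symm hne)
    have : ∑ j, μi j < ∑ j, dot D.w (vi j) :=
      Finset.sum_lt_sum (fun j _ => hge j) ⟨i, Finset.mem_univ i, hlt⟩
    linarith [hsumeq]
  have hint : ∀ x : Fin n → ℝ, IsIntegralVec x → ∃ z : ℤ, dot D.w x = (z : ℝ) := by
    intro x hx
    choose zw hzw using D.hw
    choose zx hzx using hx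
    refine ⟨∑ j, zw j * zx j, ?_⟩
    show ∑ j, D.w j * x j = _
    push_cast
    exact Finset.sum_congr rfl fun j _ => by rw [hzw j, hzx j]
  refine ⟨μ, μi, hQLeast, hQiLeast, ?_⟩
  by_cases hall : ∀ i, IsIntegralVec (vi i)
  · have hz' : ∀ i, ∃ z : ℤ, μi i = (z : ℝ) := fun i => by
      obtain ⟨z, hz⟩ := hint _ (hall i)
      exact ⟨z, by rw [← heq i, hz]⟩
    choose z hz using hz'
    have hμz : μ = ((∑ i, z i : ℤ) : ℝ) := by
      rw [hμdef]
      push_cast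
      exact Finset.sum_congr rfl fun i _ => hz i
    rw [hμz, Int.floor_intCast]
    push_cast
    exact Finset.sum_congr rfl fun i _ => by rw [hz i, Int.floor_intCast]
  · push_neg at hall
    obtain ⟨j₀, hj₀⟩ := hall
    have hother : ∀ i, i ≠ j₀ → ∃ z : ℤ, μi i = (z : ℝ) := by
      intro i hi
      by_cases h : IsIntegralVec (vi i)
      · obtain ⟨z, hz⟩ := hint _ h
        exact ⟨z, by rw [← heq i, hz]⟩
      · exact absurd (hvsub h hj₀) hi
    choose! z hz using hother
    have hsplit : μ = μi j₀ + ((∑ i ∈ Finset.univ.erase j₀, z i : ℤ) : ℝ) := by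
      rw [hμdef, ← Finset.add_sum_erase _ _ (Finset.mem_univ j₀)]
      push_cast
      congr 1
      exact Finset.sum_congr rfl fun i hi => hz i (Finset.ne_of_mem_erase hi)
    have hfloors : ∑ i, ⌊μi i⌋ = ⌊μi j₀⌋ + ∑ i ∈ Finset.univ.erase j₀, ⌊μi i⌋ :=
      (Finset.add_sum_erase _ _ (Finset.mem_univ j₀)).symm
    rw [hfloors, hsplit, Int.floor_add_intCast]
    congr 1
    exact Finset.sum_congr rfl fun i hi => by
      rw [hz i (Finset.ne_of_mem_erase hi), Int.floor_intCast]
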